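/- arXiv:1109.3573 — 4 statements merged into one kernel-verified Lean document; each statement's English description precedes it below -/
import Mathlib

section
/- Let n ≥ 1 and let f₁,…,fₙ, g₁,…,gₙ be homogeneous polynomials of degree 2 and N a homogeneous polynomial of degree 3 in ℂ[x₁,…,xₙ] with gᵢ(f₁,…,fₙ) = N·xᵢ for all i. Then for all indices i ≠ j, the polynomial xᵢ·(∂N/∂xⱼ) belongs to the ideal I = (f₁,…,fₙ). -/
/-!
Differentiate `gᵢ(f₁,…,fₙ) = N·xᵢ` with respect to `xⱼ`, `j ≠ i`. By the chain rule the left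
side is `∑ₖ (∂gᵢ/∂yₖ)(f) · ∂fₖ/∂xⱼ`, and the right side is `xᵢ · ∂N/∂xⱼ`. Each `∂gᵢ/∂yₖ` is a
linear form, so its evaluation at `f` is a linear combination of the `fₗ`.
-/

open MvPolynomial

namespace MvPolynomial

variable {R σ τ : Type*} [CommSemiring R]

theorem pderiv_bind₁ [Fintype σ] (f : σ → MvPolynomial τ R) (j : τ) (p : MvPolynomial σ R) :
    pderiv j (bind₁ f p) = ∑ k, bind₁ f (pderiv k p) * pderiv j (f k) := by
  classical
  induction p using MvPolynomial.induction_on with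
  | C a => simp
  | add p q hp hq => simp [hp, hq, add_mul, Finset.sum_add_distrib]
  | mul_X p k hp =>
    simp only [map_mul, bind₁_X_right, Derivation.leibniz, pderiv_X, smul_eq_mul, hp, map_add,
      add_mul, Finset.sum_add_distrib, Pi.single_apply, mul_ite, mul_one, mul_zero,
      apply_ite (bind₁ f), map_zero, ite_mul, zero_mul, Finset.sum_ite_eq, Finset.mem_univ,
      if_true, Finset.mul_sum, mul_assoc]

theorem IsHomogeneous.mem_pow_idealOfVars {φ : MvPolynomial σ R} {m : ℕ}
    (hφ : φ.IsHomogeneous m) : φ ∈ idealOfVars σ R ^ m := by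
  rw [mem_pow_idealOfVars_iff']
  intro d hd
  exact hφ.coeff_eq_zero hd.ne

theorem bind₁_mem_span_range_of_mem_idealOfVars (f : σ → MvPolynomial τ R)
    {p : MvPolynomial σ R} (hp : p ∈ idealOfVars σ R) :
    bind₁ f p ∈ Ideal.span (Set.range f) := by
  have hmap := Ideal.mem_map_of_mem (bind₁ f) hp
  simpa only [Ideal.map_span, ← Set.range_comp, Function.comp_def, bind₁_X_right] using hmap

theorem pderiv_bind₁_mem_span_range [Fintype σ] (f : σ → MvPolynomial τ R)
    {g : MvPolynomial σ R} {m : ℕ} (hg : g.IsHomogeneous m) (hm : 2 ≤ m) (j : τ) :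
    pderiv j (bind₁ f g) ∈ Ideal.span (Set.range f) := by
  rw [pderiv_bind₁]
  refine Ideal.sum_mem _ fun k _ => Ideal.mul_mem_right _ _ ?_
  exact bind₁_mem_span_range_of_mem_idealOfVars f
    (Ideal.pow_le_self (by omega) hg.pderiv.mem_pow_idealOfVars)

end MvPolynomial

theorem stmt1_general (n : ℕ)
    (f g : Fin n → MvPolynomial (Fin n) ℂ)
    (N : MvPolynomial (Fin n) ℂ)
    (hg : ∀ i, (g i).IsHomogeneous 2)
    (hgf : ∀ i, bind₁ f (g i) = N * X i) :
    ∀ i j : Fin n, i ≠ j →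
      X i * pderiv j N ∈ Ideal.span (Set.range f) := by
  intro i j hij
  have hderiv : pderiv j (bind₁ f (g i)) = X i * pderiv j N := by
    rw [hgf, Derivation.leibniz, pderiv_X_of_ne hij, smul_zero, zero_add, smul_eq_mul]
  exact hderiv ▸ pderiv_bind₁_mem_span_range f (hg i) le_rfl j

/-- For a quadro-quadric Cremona transformation with lift `F = (f₁,…,fₙ)` and cubic
form `N`, one has `xᵢ · ∂N/∂xⱼ ∈ (f₁,…,fₙ)` for all `i ≠ j`. -/
theorem stmt1 (n : ℕ) (hn : 1 ≤ n)
    (f g : Fin n → MvPolynomial (Fin n) ℂ)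
    (N : MvPolynomial (Fin n) ℂ)
    (hf : ∀ i, (f i).IsHomogeneous 2) (hg : ∀ i, (g i).IsHomogeneous 2)
    (hN : N.IsHomogeneous 3)
    (hgf : ∀ i, bind₁ f (g i) = N * X i) :
    ∀ i j : Fin n, i ≠ j →
      X i * pderiv j N ∈ Ideal.span (Set.range f) :=
  stmt1_general n f g N hg hgf
end

section
/- Let n ≥ 1 and let f₁,…,fₙ, g₁,…,gₙ be homogeneous polynomials of degree 2 and N, M homogeneous polynomials of degree 3 in ℂ[x₁,…,xₙ] satisfying gᵢ(f₁,…,fₙ) = N·xᵢ and fᵢ(g₁,…,gₙ) = M·xᵢ for all i. Let F, G : ℂⁿ → ℂⁿ be the evaluation maps of the f's and g's, and suppose B_G is a bilinear form on ℂⁿ such that dM_y(v) = B_G(G(y), v) for all y, v ∈ ℂⁿ. Define j_f(x) = N(x)⁻¹·F(x) and j_g(y) = M(y)⁻¹·G(y) on the loci N ≠ 0 and M ≠ 0 respectively. Then for every x with N(x) ≠ 0, the map j_g is differentiable at j_f(x) and its derivative there is the linear map v ↦ dG_{F(x)}(v) − B_G(x,v)·x, where dG_{F(x)} is the derivative of the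 polynomial map G at the point F(x). -/
open MvPolynomial

/-!
Put `y₀ = j_f(x) = N(x)⁻¹ F(x)`. The identities `G ∘ F = N · id` and `F ∘ G = M · id`, together
with homogeneity, give `M(F(x)) = N(x)²`, hence `M(y₀) = N(x)⁻¹` and `G(y₀) = N(x)⁻¹ x`. The
quotient rule for `j_g = M⁻¹ G` at `y₀` then yields `M(y₀)⁻¹ dG_{y₀} − M(y₀)⁻² dM_{y₀}(·) G(y₀)`.
Since the partial derivatives of `G` are linear, `dG_{y₀} = N(x)⁻¹ dG_{F(x)}`, and
`dM_{y₀}(v) = B(G(y₀), v) = N(x)⁻¹ B(x, v)`; all powers of `N(x)` cancel.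
-/

namespace MvPolynomial

theorem eval_bind₁ {σ τ R : Type*} [CommSemiring R] (x : τ → R)
    (f : σ → MvPolynomial τ R) (φ : MvPolynomial σ R) :
    eval x (bind₁ f φ) = eval (fun i => eval x (f i)) φ :=
  eval₂Hom_bind₁ (RingHom.id R) x f φ

section Homogeneous

variable {σ R : Type*} [CommSemiring R] {p : MvPolynomial σ R} {m : ℕ}

theorem IsHomogeneous.eval_smul (hp : p.IsHomogeneous m) (c : R) (z : σ → R) :
    eval (c • z) p = c ^ m * eval z p := by
  rw [eval_eq, eval_eq, Finset.mul_sum]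
  refine Finset.sum_congr rfl fun d hd => ?_
  have hdeg : ∑ i ∈ d.support, d i = m := by
    rw [← hp (mem_support_iff.mp hd), Finsupp.weight_apply]
    simp [Finsupp.sum]
  simp only [Pi.smul_apply, smul_eq_mul, mul_pow, Finset.prod_mul_distrib,
    Finset.prod_pow_eq_pow_sum, hdeg]
  ring

theorem IsHomogeneous.eval_zero_of_ne_zero (hp : p.IsHomogeneous m) (hm : m ≠ 0) :
    eval 0 p = 0 := by
  simpa [zero_pow hm] using hp.eval_smul 0 0

end Homogeneous

theorem hasFDerivAt_eval {𝕜 σ : Type*} [NontriviallyNormedField 𝕜] [Fintype σ]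
    (p : MvPolynomial σ 𝕜) (x : σ → 𝕜) :
    HasFDerivAt (fun y => eval y p)
      (∑ j, eval x (pderiv j p) • (ContinuousLinearMap.proj j : (σ → 𝕜) →L[𝕜] 𝕜)) x := by
  classical
  induction p using MvPolynomial.induction_on with
  | C a =>
    simp only [eval_C]
    exact (hasFDerivAt_const (𝕜 := 𝕜) a x).congr_fderiv (by ext; simp)
  | add p q hp hq =>
    simp only [map_add]
    refine (hp.fun_add hq).congr_fderiv ?_
    ext
    simp [add_mul, Finset.sum_add_distrib]
  | mul_X p i hp =>
    simp only [map_mul, eval_X]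
    refine (hp.fun_mul (hasFDerivAt_apply i x)).congr_fderiv ?_
    ext v
    simp [pderiv_X, Pi.single_apply, add_mul, Finset.sum_add_distrib, Finset.mul_sum, mul_assoc,
      apply_ite, ite_mul]

section QuadroQuadric

variable {K σ : Type*} [Field K] {f g : σ → MvPolynomial σ K} {N M : MvPolynomial σ K}

theorem eval_comp_eval_of_bind₁_eq (hgf : ∀ i, bind₁ f (g i) = N * X i) (x : σ → K) :
    (fun i => eval (fun j => eval x (f j)) (g i)) = eval x N • x := by
  funext i
  simpa [eval_bind₁] using congrArg (eval x) (hgf i)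

theorem eval_eval_eq_sq (hf : ∀ i, (f i).IsHomogeneous 2)
    (hg : ∀ i, (g i).IsHomogeneous 2) (hN : N.IsHomogeneous 3)
    (hgf : ∀ i, bind₁ f (g i) = N * X i) (hfg : ∀ i, bind₁ g (f i) = M * X i)
    {x : σ → K} (hx : eval x N ≠ 0) :
    eval (fun i => eval x (f i)) M = eval x N ^ 2 := by
  have hGy := eval_comp_eval_of_bind₁_eq hgf x
  set y := fun i => eval x (f i)
  have hy : y ≠ 0 := by
    intro hy0
    have hNx : eval x N • x = 0 := by
      rw [← hGy, hy0]
      ext i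
      exact (hg i).eval_zero_of_ne_zero two_ne_zero
    obtain rfl : x = 0 := (smul_eq_zero.1 hNx).resolve_left hx
    exact hx (hN.eval_zero_of_ne_zero three_ne_zero)
  refine smul_left_injective K hy ?_
  calc eval y M • y = fun i => eval (fun j => eval y (g j)) (f i) :=
        (eval_comp_eval_of_bind₁_eq hfg y).symm
    _ = eval x N ^ 2 • y := by
        simp only [hGy, (hf _).eval_smul]
        rfl

theorem eval_comp_inv_smul_eval (hg : ∀ i, (g i).IsHomogeneous 2)
    (hgf : ∀ i, bind₁ f (g i) = N * X i) (x : σ → K) :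
    (fun i => eval ((eval x N)⁻¹ • fun j => eval x (f j)) (g i)) = (eval x N)⁻¹ • x := by
  ext i
  rw [(hg i).eval_smul, congrFun (eval_comp_eval_of_bind₁_eq hgf x) i, Pi.smul_apply,
    Pi.smul_apply, smul_eq_mul, smul_eq_mul, ← mul_assoc, sq]
  simpa using congrArg (· * x i) (mul_self_mul_inv (eval x N)⁻¹)

theorem eval_inv_smul_eval_eq_inv (hf : ∀ i, (f i).IsHomogeneous 2)
    (hg : ∀ i, (g i).IsHomogeneous 2) (hN : N.IsHomogeneous 3) (hM : M.IsHomogeneous 3)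
    (hgf : ∀ i, bind₁ f (g i) = N * X i) (hfg : ∀ i, bind₁ g (f i) = M * X i)
    {x : σ → K} (hx : eval x N ≠ 0) :
    eval ((eval x N)⁻¹ • fun i => eval x (f i)) M = (eval x N)⁻¹ := by
  rw [hM.eval_smul, eval_eval_eq_sq hf hg hN hgf hfg hx]
  field_simp

end QuadroQuadric

end MvPolynomial

theorem HasFDerivAt.inv_smul {𝕜 E F : Type*} [NontriviallyNormedField 𝕜]
    [NormedAddCommGroup E] [NormedSpace 𝕜 E] [NormedAddCommGroup F] [NormedSpace 𝕜 F]
    {m : E → 𝕜} {G : E → F} {m' : E →L[𝕜] 𝕜} {G' : E →L[𝕜] F} {y : E}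
    (hm : HasFDerivAt m m' y) (hG : HasFDerivAt G G' y) (hy : m y ≠ 0) :
    HasFDerivAt (fun y => (m y)⁻¹ • G y) ((m y)⁻¹ • G' - (m y ^ 2)⁻¹ • m'.smulRight (G y)) y := by
  refine (((hasFDerivAt_inv hy).comp y hm).smul hG).congr_fderiv ?_
  ext v
  simp [sub_eq_add_neg, smul_smul, mul_comm]

theorem stmt8_general (n : ℕ)
    (f g : Fin n → MvPolynomial (Fin n) ℂ)
    (N M : MvPolynomial (Fin n) ℂ)
    (hf : ∀ i, (f i).IsHomogeneous 2) (hg : ∀ i, (g i).IsHomogeneous 2)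
    (hN : N.IsHomogeneous 3) (hM : M.IsHomogeneous 3)
    (hgf : ∀ i, bind₁ f (g i) = N * X i)
    (hfg : ∀ i, bind₁ g (f i) = M * X i)
    (F G jf jg : (Fin n → ℂ) → (Fin n → ℂ))
    (hF : ∀ x, F x = fun i => eval x (f i))
    (hG : ∀ y, G y = fun i => eval y (g i))
    (hjf : ∀ x, jf x = (eval x N)⁻¹ • F x)
    (hjg : ∀ y, jg y = (eval y M)⁻¹ • G y)
    (B : (Fin n → ℂ) →ₗ[ℂ] (Fin n → ℂ) →ₗ[ℂ] ℂ)
    (hB : ∀ y v : Fin n → ℂ,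
      (∑ j : Fin n, v j * eval y (pderiv j M)) = B (G y) v) :
    ∀ x : Fin n → ℂ, eval x N ≠ 0 →
      DifferentiableAt ℂ jg (jf x) ∧
      ∀ v : Fin n → ℂ,
        fderiv ℂ jg (jf x) v =
          (fun i => ∑ j : Fin n, v j * eval (F x) (pderiv j (g i))) - B x v • x := by
  intro x hx
  rw [hjf, hF]
  obtain rfl : jg = fun y => (eval y M)⁻¹ • G y := funext hjg
  obtain rfl : G = fun y i => eval y (g i) := funext hG
  beta_reduce at hB ⊢
  have hMy₀ := eval_inv_smul_eval_eq_inv hf hg hN hM hgf hfg hx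
  have hGy₀ := eval_comp_inv_smul_eval hg hgf x
  set c := (eval x N)⁻¹
  have hc0 : c ≠ 0 := inv_ne_zero hx
  set y₀ : Fin n → ℂ := c • fun i => eval x (f i) with hy₀
  have hdG : ∀ i j, eval y₀ (pderiv j (g i)) = c * eval (fun i => eval x (f i)) (pderiv j (g i)) :=
    fun i j => by rw [hy₀, ((hg i).pderiv).eval_smul, pow_one]
  have hD := (hasFDerivAt_eval M y₀).inv_smul
    (hasFDerivAt_pi.2 fun i => hasFDerivAt_eval (g i) y₀) (hMy₀ ▸ hc0)
  refine ⟨hD.differentiableAt, fun v => ?_⟩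
  have hDM : ∑ j, eval y₀ (pderiv j M) * v j = c * B x v := by
    simpa [hGy₀, mul_comm] using hB y₀ v
  rw [hD.fderiv]
  ext i
  simp only [hMy₀, hGy₀, hDM, hdG, sub_apply, smul_apply, sum_apply,
    ContinuousLinearMap.coe_pi', ContinuousLinearMap.proj_apply,
    ContinuousLinearMap.smulRight_apply, Pi.sub_apply, Pi.smul_apply, smul_eq_mul,
    Finset.mul_sum, mul_comm (v _)]
  field_simp

/-- If `B_G` is a bilinear form with `dM_y(v) = B_G(G(y), v)`, then for every `x`
with `N(x) ≠ 0` the inversion `j_g` is differentiable at `j_f(x)` with derivative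
`v ↦ dG_{F(x)}(v) − B_G(x,v)·x`. -/
theorem stmt8 (n : ℕ) (hn : 1 ≤ n)
    (f g : Fin n → MvPolynomial (Fin n) ℂ)
    (N M : MvPolynomial (Fin n) ℂ)
    (hf : ∀ i, (f i).IsHomogeneous 2) (hg : ∀ i, (g i).IsHomogeneous 2)
    (hN : N.IsHomogeneous 3) (hM : M.IsHomogeneous 3)
    (hgf : ∀ i, bind₁ f (g i) = N * X i)
    (hfg : ∀ i, bind₁ g (f i) = M * X i)
    (F G jf jg : (Fin n → ℂ) → (Fin n → ℂ))
    (hF : ∀ x, F x = fun i => eval x (f i))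
    (hG : ∀ y, G y = fun i => eval y (g i))
    (hjf : ∀ x, jf x = (eval x N)⁻¹ • F x)
    (hjg : ∀ y, jg y = (eval y M)⁻¹ • G y)
    (B : (Fin n → ℂ) →ₗ[ℂ] (Fin n → ℂ) →ₗ[ℂ] ℂ)
    (hB : ∀ y v : Fin n → ℂ,
      (∑ j : Fin n, v j * eval y (pderiv j M)) = B (G y) v) :
    ∀ x : Fin n → ℂ, eval x N ≠ 0 →
      DifferentiableAt ℂ jg (jf x) ∧
      ∀ v : Fin n → ℂ,
        fderiv ℂ jg (jf x) v =
          (fun i => ∑ j : Fin n, v j * eval (F x) (pderiv j (g i))) - B x v • x :=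
  stmt8_general n f g N M hf hg hN hM hgf hfg F G jf jg hF hG hjf hjg B hB
end

section
/- Let n ≥ 1 and let f₁,…,fₙ be homogeneous polynomials of degree 2 and N a homogeneous polynomial of degree 3 in ℂ[x₁,…,xₙ] such that fᵢ(f₁,…,fₙ) = N·xᵢ for all i (i.e. the evaluation map F : ℂⁿ → ℂⁿ satisfies F(F(x)) = N(x)·x). Define F̃ : ℂⁿ × ℂ → ℂⁿ × ℂ by F̃(x,r) = (r·F(x), N(x)). Then F̃(F̃(x,r)) = (r·N(x))²·(x,r) for all (x,r) ∈ ℂⁿ × ℂ; in particular the projectivization of F̃ is a Cremona involution of bidegree (3,3) of ℙⁿ with associated quartic form Ñ(x,r) = r·N(x). -/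
open MvPolynomial

lemma eval_smul_homog {n d : ℕ} {p : MvPolynomial (Fin n) ℂ} (hp : p.IsHomogeneous d)
    (c : ℂ) (x : Fin n → ℂ) : eval (c • x) p = c ^ d * eval x p := by
  rw [eval_eq', eval_eq', Finset.mul_sum]
  refine Finset.sum_congr rfl fun m hm => ?_
  have hdeg : m.degree = d := by
    by_contra h
    exact (mem_support_iff.mp hm) (hp.coeff_eq_zero h)
  have hsum : ∑ i, m i = d := by
    rw [← hdeg, Finsupp.degree]
    exact (Finset.sum_subset (Finset.subset_univ _)
      (fun i _ hi => Finsupp.notMem_support_iff.mp hi)).symm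
  calc coeff m p * ∏ i, (c • x) i ^ m i
      = coeff m p * ((∏ i, c ^ m i) * ∏ i, x i ^ m i) := by
        simp [mul_pow, Finset.prod_mul_distrib]
    _ = c ^ d * (coeff m p * ∏ i, x i ^ m i) := by
        rw [Finset.prod_pow_eq_pow_sum, hsum]; ring

lemma eval_bind₁' {n : ℕ} (f : Fin n → MvPolynomial (Fin n) ℂ) (x : Fin n → ℂ)
    (p : MvPolynomial (Fin n) ℂ) :
    eval x (bind₁ f p) = eval (fun i => eval x (f i)) p := by
  have h := aeval_bind₁ (R := ℂ) x f p
  simp only [aeval_eq_eval₂Hom, Algebra.algebraMap_self, eval] at h ⊢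
  exact h

lemma eval_zero_homog {n d : ℕ} {p : MvPolynomial (Fin n) ℂ} (hp : p.IsHomogeneous d)
    (hd : d ≠ 0) : eval (0 : Fin n → ℂ) p = 0 := by
  have h := eval_smul_homog hp 0 0
  simpa [zero_pow hd] using h

/-- If `F(F(x)) = N(x)·x` (adjoint of a rank 3 algebra), then the map
`F̃(x,r) = (r·F(x), N(x))` satisfies `F̃(F̃(x,r)) = (r·N(x))²·(x,r)` : its
projectivization is a Cremona involution of bidegree `(3,3)` of `ℙⁿ`
(of Spampinato type) with associated quartic form `r·N(x)`. -/
theorem stmt10 (n : ℕ) (hn : 1 ≤ n)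
    (f : Fin n → MvPolynomial (Fin n) ℂ)
    (N : MvPolynomial (Fin n) ℂ)
    (hf : ∀ i, (f i).IsHomogeneous 2) (hN : N.IsHomogeneous 3)
    (hff : ∀ i, bind₁ f (f i) = N * X i)
    (F : (Fin n → ℂ) → (Fin n → ℂ))
    (hF : ∀ x, F x = fun i => eval x (f i))
    (Ft : ((Fin n → ℂ) × ℂ) → ((Fin n → ℂ) × ℂ))
    (hFt : ∀ (x : Fin n → ℂ) (r : ℂ), Ft (x, r) = (r • F x, eval x N)) :
    ∀ (x : Fin n → ℂ) (r : ℂ),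
      Ft (Ft (x, r)) = ((r * eval x N) ^ 2) • (x, r) := by
  intro x r
  set A : ℂ := eval x N with hA
  -- F (F x) = A • x
  have hFF : F (F x) = A • x := by
    funext i
    have h := congrArg (eval x) (hff i)
    rw [eval_bind₁'] at h
    rw [hF (F x), hF x]
    simpa [hA] using h
  -- N (F x) = A ^ 2
  have hNF : eval (F x) N = A ^ 2 := by
    by_cases hFx : F x = 0
    · -- then A • x = F (F x) = F 0 = 0
      have hF0 : F (0 : Fin n → ℂ) = 0 := by
        funext i
        rw [hF]
        exact eval_zero_homog (hf i) (by norm_num)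
      have hAx : A • x = 0 := by rw [← hFF, hFx, hF0]
      have hA0 : A = 0 := by
        rcases smul_eq_zero.mp hAx with h | h
        · exact h
        · rw [hA, h]; exact eval_zero_homog hN (by norm_num)
      rw [hFx, hA0, eval_zero_homog hN (by norm_num)]
      ring
    · obtain ⟨i, hi⟩ : ∃ i, F x i ≠ 0 := by
        by_contra h
        push_neg at h
        exact hFx (funext h)
      have h := congrArg (eval (F x)) (hff i)
      rw [eval_bind₁'] at h
      have e1 : (fun j => eval (F x) (f j)) = A • x := (hF (F x)).symm.trans hFF
      rw [e1, eval_smul_homog (hf i)] at h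
      simp only [eval_mul, eval_X] at h
      simp only [hF x] at h hi ⊢
      exact (mul_right_cancel₀ hi h.symm)
  -- now compute
  rw [hFt x r, hFt (r • F x) A]
  have hFr : F (r • F x) = (r ^ 2 * A) • x := by
    funext i
    have e1 : (fun j => eval (F x) (f j)) = A • x := (hF (F x)).symm.trans hFF
    simp only [hF (r • F x)]
    rw [eval_smul_homog (hf i) r (F x), congrFun e1 i]
    simp only [Pi.smul_apply, smul_eq_mul]
    ring
  rw [hFr, eval_smul_homog hN r (F x), hNF]
  rw [smul_smul, show A * (r ^ 2 * A) = (r * A) ^ 2 by ring]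
  have : r ^ 3 * A ^ 2 = (r * A) ^ 2 • r := by
    simp only [smul_eq_mul]; ring
  rw [this]
  rfl
end

section
/- Let n ≥ 3 and define the quadratic map F : ℂⁿ → ℂⁿ by F(x₁,…,xₙ) = (x₁², −x₁x₂, …, −x₁x_{n−1}, x₂² + ⋯ + x_{n−1}² − x₁xₙ). Then F(F(x)) = x₁³·x for every x ∈ ℂⁿ; in particular F is the affine lift of a quadro-quadric Cremona involution of ℙⁿ⁻¹ whose associated cubic form is N(x) = x₁³. -/
/-- For every dimension `n + 3 ≥ 3`, the quadratic map
`F(x₁,…,xₙ) = (x₁², −x₁x₂, …, −x₁x_{n−1}, x₂² + ⋯ + x_{n−1}² − x₁xₙ)`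
satisfies `F(F(x)) = x₁³·x`: it is the affine lift of a quadro-quadric Cremona
involution with associated cubic form `N(x) = x₁³`. -/
theorem stmt16 (n : ℕ)
    (F : (Fin (n + 3) → ℂ) → (Fin (n + 3) → ℂ))
    (hF : ∀ (x : Fin (n + 3) → ℂ) (i : Fin (n + 3)),
      F x i =
        if i = 0 then x 0 ^ 2
        else if i = Fin.last (n + 2) then
          (∑ j : Fin (n + 3),
            if j ≠ 0 ∧ j ≠ Fin.last (n + 2) then x j ^ 2 else 0)
            - x 0 * x (Fin.last (n + 2))
        else -(x 0 * x i)) :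
    ∀ x : Fin (n + 3) → ℂ, F (F x) = x 0 ^ 3 • x := by
  intro x
  have h0 : (0 : Fin (n + 3)) ≠ Fin.last (n + 2) := by
    simp [Fin.ext_iff]
  have hF0 : F x 0 = x 0 ^ 2 := by rw [hF]; simp
  have hFl : F x (Fin.last (n + 2)) =
      (∑ j : Fin (n + 3),
        if j ≠ 0 ∧ j ≠ Fin.last (n + 2) then x j ^ 2 else 0)
        - x 0 * x (Fin.last (n + 2)) := by
    rw [hF]; simp [h0.symm]
  have hFm : ∀ i : Fin (n + 3), i ≠ 0 → i ≠ Fin.last (n + 2) →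
      F x i = -(x 0 * x i) := by
    intro i h1 h2; rw [hF]; simp [h1, h2]
  funext i
  rw [hF]
  by_cases hi0 : i = 0
  · subst hi0
    rw [if_pos rfl, hF0, Pi.smul_apply, smul_eq_mul]
    ring
  · rw [if_neg hi0]
    by_cases hil : i = Fin.last (n + 2)
    · subst hil
      rw [if_pos rfl, hF0, hFl]
      have hsum : (∑ j : Fin (n + 3),
          if j ≠ 0 ∧ j ≠ Fin.last (n + 2) then F x j ^ 2 else 0)
          = x 0 ^ 2 * ∑ j : Fin (n + 3),
          if j ≠ 0 ∧ j ≠ Fin.last (n + 2) then x j ^ 2 else 0 := by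
        rw [Finset.mul_sum]
        refine Finset.sum_congr rfl fun j _ => ?_
        by_cases hj : j ≠ 0 ∧ j ≠ Fin.last (n + 2)
        · rw [if_pos hj, if_pos hj, hFm j hj.1 hj.2]; ring
        · rw [if_neg hj, if_neg hj, mul_zero]
      rw [hsum, Pi.smul_apply, smul_eq_mul]
      ring
    · rw [if_neg hil, hFm i hi0 hil, hF0, Pi.smul_apply, smul_eq_mul]
      ring
end
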